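/- Let X₁, …, X_k be independent identically distributed real random variables with finite variance, and let Y = max_{1 ≤ i ≤ k} X_i. Then Var(Y) ≤ k·Var(X₁). -/

import Mathlib

/-!
For every constant `c`, `Var Y ≤ E[(Y - c)²]`. Take `c = maxᵢ E[Xᵢ]`: since the maximum is
`1`-Lipschitz for the sup distance, `(Y - c)² ≤ maxᵢ (Xᵢ - E[Xᵢ])² ≤ ∑ᵢ (Xᵢ - E[Xᵢ])²`, so
`Var Y ≤ ∑ᵢ Var Xᵢ = k Var X₁`.
-/

open MeasureTheory ProbabilityTheory Finset

section Sup'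

variable {ι : Type*} {s : Finset ι} (hs : s.Nonempty)

lemma Finset.sup'_sub_sup'_le_sup'_abs_sub (f g : ι → ℝ) :
    s.sup' hs f - s.sup' hs g ≤ s.sup' hs fun i => |f i - g i| := by
  rw [sub_le_iff_le_add]
  refine Finset.sup'_le hs f fun i hi => ?_
  have hg : g i ≤ s.sup' hs g := le_sup' g hi
  have hfg : |f i - g i| ≤ s.sup' hs fun j => |f j - g j| := le_sup' (fun j => |f j - g j|) hi
  linarith [le_abs_self (f i - g i)]

lemma Finset.abs_sup'_sub_sup'_le (f g : ι → ℝ) :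
    |s.sup' hs f - s.sup' hs g| ≤ s.sup' hs fun i => |f i - g i| := by
  refine abs_sub_le_iff.mpr ⟨sup'_sub_sup'_le_sup'_abs_sub hs f g, ?_⟩
  simpa only [abs_sub_comm (g _)] using sup'_sub_sup'_le_sup'_abs_sub hs g f

lemma Finset.sq_sup'_sub_sup'_le_sum (f g : ι → ℝ) :
    (s.sup' hs f - s.sup' hs g) ^ 2 ≤ ∑ i ∈ s, (f i - g i) ^ 2 := by
  obtain ⟨i, hi, hmax⟩ := exists_mem_eq_sup' hs fun i => |f i - g i|
  calc (s.sup' hs f - s.sup' hs g) ^ 2 = |s.sup' hs f - s.sup' hs g| ^ 2 := (sq_abs _).symm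
    _ ≤ |f i - g i| ^ 2 :=
        pow_le_pow_left₀ (abs_nonneg _) ((abs_sup'_sub_sup'_le hs f g).trans_eq hmax) 2
    _ = (f i - g i) ^ 2 := sq_abs _
    _ ≤ ∑ i ∈ s, (f i - g i) ^ 2 := single_le_sum (fun j _ => sq_nonneg (f j - g j)) hi

lemma Finset.aemeasurable_sup'_apply {Ω : Type*} [MeasurableSpace Ω] {μ : Measure Ω}
    {f : ι → Ω → ℝ} (hf : ∀ i ∈ s, AEMeasurable (f i) μ) :
    AEMeasurable (fun ω => s.sup' hs fun i => f i ω) μ := by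
  simpa only [← Finset.sup'_apply] using sup'_induction (p := (AEMeasurable · μ)) hs f
    (fun _ hf _ hg => hf.sup hg) hf

end Sup'

section Variance

variable {Ω : Type*} [MeasurableSpace Ω] {μ : Measure Ω} [IsProbabilityMeasure μ]

lemma ProbabilityTheory.variance_le_integral_sq_sub {X : Ω → ℝ}
    (hX : AEStronglyMeasurable X μ) (c : ℝ) :
    Var[X; μ] ≤ ∫ ω, (X ω - c) ^ 2 ∂μ := by
  rw [← variance_sub_const hX c]
  exact variance_le_expectation_sq (hX.sub aestronglyMeasurable_const)

lemma ProbabilityTheory.variance_sup'_le_sum_variance {ι : Type*} {s : Finset ι}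
    (hs : s.Nonempty) {X : ι → Ω → ℝ} (hX : ∀ i ∈ s, MemLp (X i) 2 μ) :
    Var[fun ω => s.sup' hs fun i => X i ω; μ] ≤ ∑ i ∈ s, Var[X i; μ] := by
  have hY : AEStronglyMeasurable (fun ω => s.sup' hs fun i => X i ω) μ :=
    (aemeasurable_sup'_apply hs fun i hi => (hX i hi).aemeasurable).aestronglyMeasurable
  have hint : ∀ i ∈ s, Integrable (fun ω => (X i ω - μ[X i]) ^ 2) μ :=
    fun i hi => ((hX i hi).sub (memLp_const _)).integrable_sq
  calc Var[fun ω => s.sup' hs fun i => X i ω; μ]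
      ≤ ∫ ω, ((s.sup' hs fun i => X i ω) - s.sup' hs fun i => μ[X i]) ^ 2 ∂μ :=
        variance_le_integral_sq_sub hY _
    _ ≤ ∫ ω, ∑ i ∈ s, (X i ω - μ[X i]) ^ 2 ∂μ :=
        integral_mono_of_nonneg (ae_of_all _ fun _ => sq_nonneg _)
          (integrable_finsetSum s hint)
          (ae_of_all _ fun ω => sq_sup'_sub_sup'_le_sum hs _ _)
    _ = ∑ i ∈ s, Var[X i; μ] := by
        rw [integral_finsetSum s hint]
        exact sum_congr rfl fun i hi => (variance_eq_integral (hX i hi).aemeasurable).symm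

end Variance

theorem variance_max_le_general {Ω : Type*} [MeasureSpace Ω]
    [IsProbabilityMeasure (ℙ : Measure Ω)] {k : ℕ} [NeZero k]
    (X : Fin k → Ω → ℝ)
    (hL2 : ∀ i, MemLp (X i) 2 ℙ)
    (hident : ∀ i j : Fin k, IdentDistrib (X i) (X j) ℙ ℙ) :
    variance (fun ω => univ.sup' univ_nonempty (fun i => X i ω)) ℙ
      ≤ k * variance (X 0) ℙ := by
  calc variance (fun ω => univ.sup' univ_nonempty (fun i => X i ω)) ℙ
      ≤ ∑ i, variance (X i) ℙ := variance_sup'_le_sum_variance _ fun i _ => hL2 i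
    _ = ∑ _i : Fin k, variance (X 0) ℙ := sum_congr rfl fun i _ => (hident i 0).variance_eq
    _ = k * variance (X 0) ℙ := by simp

/-- For `X₁, …, X_k` iid real random variables with finite variance and
`Y = max_i X_i`, we have `Var(Y) ≤ k * Var(X₁)`. -/
theorem variance_max_le {Ω : Type*} [MeasureSpace Ω]
    [IsProbabilityMeasure (ℙ : Measure Ω)] {k : ℕ} [NeZero k]
    (X : Fin k → Ω → ℝ)
    (hmeas : ∀ i, Measurable (X i))
    (hL2 : ∀ i, MemLp (X i) 2 ℙ)
    (hindep : iIndepFun X ℙ)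
    (hident : ∀ i j : Fin k, IdentDistrib (X i) (X j) ℙ ℙ) :
    variance (fun ω => univ.sup' univ_nonempty (fun i => X i ω)) ℙ
      ≤ k * variance (X 0) ℙ :=
  variance_max_le_general X hL2 hident
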